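/- Manaster–Koehler representation: fix k ≥ 0 and 0 ≤ c < 1. If c ≤ C_BS(k, √(2k)), then Y_BS(k,c) = inf over 0 < y ≤ √(2k) of [y + (c - C_BS(k,y))/φ(-k/y + y/2)]; if c ≥ C_BS(k, √(2k)), then Y_BS(k,c) = sup over y ≥ √(2k) of [y + (c - C_BS(k,y))/φ(-k/y + y/2)]. -/

import Mathlib

open MeasureTheory Real Filter Asymptotics Set

/-- Standard normal density. -/
noncomputable def phi (z : ℝ) : ℝ := (Real.sqrt (2 * Real.pi))⁻¹ * Real.exp (-z ^ 2 / 2)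

/-- Standard normal CDF. -/
noncomputable def Phi (x : ℝ) : ℝ := ∫ z in Set.Iic x, phi z

/-- Black–Scholes normalized call price. -/
noncomputable def CBS (k y : ℝ) : ℝ :=
  if 0 < y then Phi (-k / y + y / 2) - Real.exp k * Phi (-k / y - y / 2)
  else max (1 - Real.exp k) 0

/-- Implied total standard deviation: inverse of `CBS k` on `[0,∞)`. -/
noncomputable def YBS (k c : ℝ) : ℝ := sInf {y : ℝ | 0 ≤ y ∧ CBS k y = c}

/-- Inverse of the standard normal CDF on (0,1). -/
noncomputable def PhiInv (u : ℝ) : ℝ := sInf {x : ℝ | u ≤ Phi x}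

/-- Extended-real quantile with the convention `Φ⁻¹(u) = +∞` for `u ≥ 1`, `-∞` for `u ≤ 0`. -/
noncomputable def PhiInvE (u : ℝ) : EReal :=
  if 1 ≤ u then ⊤ else if u ≤ 0 then ⊥ else ((PhiInv u : ℝ) : EReal)

/-!
`CBS k` is strictly increasing on `[0, ∞)`, from `0` to `1`, with `∂CBS/∂y = φ(d₁)`, where
`d₁ = -k/y + y/2` increases in `y` and changes sign at `y = √(2k)`. Hence the vega `φ(d₁)`
increases on `(0, √(2k)]` and decreases on `[√(2k), ∞)`: `CBS k` is convex, then concave. The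
function in the statement is the Newton step for `CBS k · = c` from `y`. By the mean value
theorem it never falls below the root `Y = YBS k c` on the convex part and never exceeds it on
the concave part, and it equals `Y` at `y = Y`. When `c = 0` the root `0` lies outside
`(0, √(2k)]`, but there the Newton step is at most `y`.
-/

open Topology ProbabilityTheory

lemma phi_eq_gaussianPDFReal : phi = gaussianPDFReal 0 1 := by
  ext z; simp [phi, gaussianPDFReal]

lemma phi_pos (z : ℝ) : 0 < phi z :=
  phi_eq_gaussianPDFReal ▸ gaussianPDFReal_pos 0 1 z one_ne_zero

lemma integrable_phi : Integrable phi := phi_eq_gaussianPDFReal ▸ integrable_gaussianPDFReal 0 1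

lemma continuous_phi : Continuous phi := by unfold phi; fun_prop

lemma Phi_eq_cdf : Phi = cdf (gaussianReal 0 1) := by
  ext x
  rw [cdf_eq_real, measureReal_def, gaussianReal_apply_eq_integral 0 one_ne_zero,
    ENNReal.toReal_ofReal (setIntegral_nonneg measurableSet_Iic
      fun z _ => gaussianPDFReal_nonneg 0 1 z), Phi, phi_eq_gaussianPDFReal]

lemma hasDerivAt_Phi (x : ℝ) : HasDerivAt Phi (phi x) x := by
  have h : HasDerivAt (fun u => Phi 0 + ∫ z in (0:ℝ)..u, phi z) (phi x) x :=
    (intervalIntegral.integral_hasDerivAt_right integrable_phi.intervalIntegrable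
      (continuous_phi.stronglyMeasurableAtFilter _ _) continuous_phi.continuousAt).const_add _
  refine h.congr_of_eventuallyEq (Eventually.of_forall fun u => ?_)
  show Phi u = Phi 0 + ∫ z in (0:ℝ)..u, phi z
  rw [← intervalIntegral.integral_Iic_sub_Iic integrable_phi.integrableOn
    integrable_phi.integrableOn]
  simp [Phi]

lemma continuous_Phi : Continuous Phi :=
  continuous_iff_continuousAt.mpr fun x => (hasDerivAt_Phi x).continuousAt

lemma tendsto_Phi_atTop : Tendsto Phi atTop (𝓝 1) := Phi_eq_cdf ▸ tendsto_cdf_atTop _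

lemma tendsto_Phi_atBot : Tendsto Phi atBot (𝓝 0) := Phi_eq_cdf ▸ tendsto_cdf_atBot _

lemma phi_le_phi_of_abs_le {x y : ℝ} (h : |y| ≤ |x|) : phi x ≤ phi y := by
  unfold phi
  have := sq_le_sq.mpr h
  gcongr

lemma CBS_zero {k : ℝ} (hk : 0 ≤ k) : CBS k 0 = 0 := by
  simp [CBS, Real.one_le_exp hk]

lemma CBS_of_pos (k : ℝ) {y : ℝ} (hy : 0 < y) :
    CBS k y = Phi (-k / y + y / 2) - Real.exp k * Phi (-k / y - y / 2) :=
  if_pos hy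

lemma exp_mul_phi (k : ℝ) {y : ℝ} (hy : y ≠ 0) :
    Real.exp k * phi (-k / y - y / 2) = phi (-k / y + y / 2) := by
  unfold phi
  rw [mul_left_comm, ← Real.exp_add]
  congr 2
  field_simp
  ring

lemma hasDerivAt_CBS (k : ℝ) {y : ℝ} (hy : 0 < y) :
    HasDerivAt (CBS k) (phi (-k / y + y / 2)) y := by
  have hinv : HasDerivAt (fun z : ℝ => -k / z) (k / y ^ 2) y := by
    simpa [div_eq_mul_inv] using (hasDerivAt_inv hy.ne').const_mul (-k)
  have hd₁ := (hasDerivAt_Phi _).comp y (hinv.add ((hasDerivAt_id y).div_const 2))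
  have hd₂ := ((hasDerivAt_Phi _).comp y (hinv.sub ((hasDerivAt_id y).div_const 2))).const_mul
    (Real.exp k)
  have hvega : phi (-k / y + y / 2) * (k / y ^ 2 + 1 / 2) -
      Real.exp k * (phi (-k / y - y / 2) * (k / y ^ 2 - 1 / 2)) = phi (-k / y + y / 2) := by
    rw [← mul_assoc, exp_mul_phi k hy.ne']
    ring
  refine hvega ▸ (hd₁.sub hd₂).congr_of_eventuallyEq ?_
  filter_upwards [Ioi_mem_nhds hy] with z hz
  exact CBS_of_pos k hz

lemma tendsto_CBS_nhdsGT_zero {k : ℝ} (hk : 0 ≤ k) : Tendsto (CBS k) (𝓝[>] 0) (𝓝 0) := by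
  have hCBS : CBS k =ᶠ[𝓝[>] 0]
      fun y => Phi (-k / y + y / 2) - Real.exp k * Phi (-k / y - y / 2) :=
    eventually_mem_nhdsWithin.mono fun y hy => CBS_of_pos k hy
  refine Tendsto.congr' hCBS.symm ?_
  have hhalf : Tendsto (fun y : ℝ => y / 2) (𝓝[>] 0) (𝓝 0) := by
    simpa using ((continuous_id.div_const (2 : ℝ)).tendsto 0).mono_left nhdsWithin_le_nhds
  have hneg_half : Tendsto (fun y : ℝ => -(y / 2)) (𝓝[>] 0) (𝓝 0) := by
    simpa using hhalf.neg
  rcases hk.eq_or_lt with rfl | hk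
  · simpa using ((continuous_Phi.tendsto 0).comp hhalf).sub
      ((continuous_Phi.tendsto 0).comp hneg_half)
  · have hinv : Tendsto (fun y : ℝ => -k / y) (𝓝[>] 0) atBot :=
      (tendsto_neg_atTop_atBot.comp (tendsto_inv_nhdsGT_zero.const_mul_atTop hk)).congr
        fun y => by simp [div_eq_mul_inv]
    have hd₂ : Tendsto (fun y : ℝ => -k / y - y / 2) (𝓝[>] 0) atBot := by
      simpa [sub_eq_add_neg] using hinv.atBot_add hneg_half
    simpa using (tendsto_Phi_atBot.comp (hinv.atBot_add hhalf)).sub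
      ((tendsto_Phi_atBot.comp hd₂).const_mul (Real.exp k))

lemma tendsto_CBS_atTop (k : ℝ) : Tendsto (CBS k) atTop (𝓝 1) := by
  have hCBS : CBS k =ᶠ[atTop]
      fun y => Phi (-k / y + y / 2) - Real.exp k * Phi (-k / y - y / 2) :=
    (eventually_gt_atTop 0).mono fun y hy => CBS_of_pos k hy
  refine Tendsto.congr' hCBS.symm ?_
  have hinv : Tendsto (fun y : ℝ => -k / y) atTop (𝓝 0) :=
    tendsto_const_nhds.div_atTop tendsto_id
  have hhalf : Tendsto (fun y : ℝ => y / 2) atTop atTop := tendsto_id.atTop_div_const two_pos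
  have hd₂ : Tendsto (fun y : ℝ => -k / y - y / 2) atTop atBot := by
    simpa [sub_eq_add_neg] using hinv.add_atBot (tendsto_neg_atTop_atBot.comp hhalf)
  simpa using (tendsto_Phi_atTop.comp (hinv.add_atTop hhalf)).sub
    ((tendsto_Phi_atBot.comp hd₂).const_mul (Real.exp k))

lemma continuousOn_CBS {k : ℝ} (hk : 0 ≤ k) : ContinuousOn (CBS k) (Ici 0) := by
  intro y hy
  rcases (mem_Ici.mp hy).eq_or_lt with rfl | hy
  · rw [← continuousWithinAt_Ioi_iff_Ici, ContinuousWithinAt, CBS_zero hk]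
    exact tendsto_CBS_nhdsGT_zero hk
  · exact (hasDerivAt_CBS k hy).continuousAt.continuousWithinAt

lemma strictMonoOn_CBS {k : ℝ} (hk : 0 ≤ k) : StrictMonoOn (CBS k) (Ici 0) :=
  strictMonoOn_of_deriv_pos (convex_Ici 0) (continuousOn_CBS hk) fun y hy => by
    rw [interior_Ici] at hy
    exact (hasDerivAt_CBS k hy).deriv ▸ phi_pos _

lemma CBS_nonneg {k y : ℝ} (hk : 0 ≤ k) (hy : 0 ≤ y) : 0 ≤ CBS k y :=
  CBS_zero hk ▸ (strictMonoOn_CBS hk).monotoneOn self_mem_Ici hy hy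

lemma exists_CBS_eq {k c : ℝ} (hk : 0 ≤ k) (hc0 : 0 ≤ c) (hc1 : c < 1) :
    ∃ y, 0 ≤ y ∧ CBS k y = c := by
  obtain ⟨b, hcb, hb⟩ :=
    ((tendsto_CBS_atTop k).eventually_const_lt hc1 |>.and (eventually_ge_atTop 0)).exists
  obtain ⟨y, hy, hyc⟩ :=
    intermediate_value_Icc hb ((continuousOn_CBS hk).mono Icc_subset_Ici_self)
    ⟨(CBS_zero hk).symm ▸ hc0, hcb.le⟩
  exact ⟨y, hy.1, hyc⟩

lemma YBS_CBS {k y : ℝ} (hk : 0 ≤ k) (hy : 0 ≤ y) : YBS k (CBS k y) = y := by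
  have hroots : {z : ℝ | 0 ≤ z ∧ CBS k z = CBS k y} = {y} := by
    ext z
    exact ⟨fun hz => (strictMonoOn_CBS hk).injOn hz.1 hy hz.2,
      fun hz => by subst hz; exact ⟨hy, rfl⟩⟩
  rw [YBS, hroots, csInf_singleton]

lemma neg_div_add_half_eq (k y : ℝ) : -k / y + y / 2 = (y ^ 2 - 2 * k) / (2 * y) := by
  rcases eq_or_ne y 0 with rfl | hy
  · simp
  · field_simp
    ring

lemma neg_div_add_half_nonpos {k y : ℝ} (hy : 0 < y) (hys : y ≤ √(2 * k)) :
    -k / y + y / 2 ≤ 0 := by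
  rw [neg_div_add_half_eq]
  have : y ^ 2 ≤ 2 * k := (Real.le_sqrt' hy).mp hys
  exact div_nonpos_of_nonpos_of_nonneg (by linarith) (by positivity)

lemma neg_div_add_half_nonneg {k y : ℝ} (hys : √(2 * k) ≤ y) : 0 ≤ -k / y + y / 2 := by
  have hy : 0 ≤ y := (Real.sqrt_nonneg _).trans hys
  rw [neg_div_add_half_eq]
  have : 2 * k ≤ y ^ 2 := (Real.sqrt_le_left hy).mp hys
  exact div_nonneg (by linarith) (by positivity)

lemma monotoneOn_neg_div_add_half {k : ℝ} (hk : 0 ≤ k) :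
    MonotoneOn (fun y : ℝ => -k / y + y / 2) (Ioi 0) := by
  intro a ha b _ hab
  have : k / b ≤ k / a := div_le_div_of_nonneg_left hk ha hab
  simp only [neg_div]
  linarith

lemma monotoneOn_vega {k : ℝ} (hk : 0 ≤ k) :
    MonotoneOn (fun y : ℝ => phi (-k / y + y / 2)) (Ioc 0 √(2 * k)) := by
  intro a ha b hb hab
  have hd := monotoneOn_neg_div_add_half hk ha.1 hb.1 hab
  have hb' := neg_div_add_half_nonpos hb.1 hb.2
  exact phi_le_phi_of_abs_le (by rw [abs_of_nonpos hb', abs_of_nonpos (hd.trans hb')]; linarith)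

lemma antitoneOn_vega {k : ℝ} (hk : 0 ≤ k) :
    AntitoneOn (fun y : ℝ => phi (-k / y + y / 2)) (Ici √(2 * k)) := by
  intro a ha b hb hab
  have ha' := neg_div_add_half_nonneg ha
  have hd : -k / a + a / 2 ≤ -k / b + b / 2 := by
    rcases ((Real.sqrt_nonneg _).trans ha).eq_or_lt with rfl | ha0
    · simpa using neg_div_add_half_nonneg hb
    · exact monotoneOn_neg_div_add_half hk ha0 (ha0.trans_le hab) hab
  exact phi_le_phi_of_abs_le (by rw [abs_of_nonneg ha', abs_of_nonneg (ha'.trans hd)]; exact hd)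

lemma differentiableOn_CBS (k : ℝ) : DifferentiableOn ℝ (CBS k) (Ioi 0) :=
  fun _ hy => (hasDerivAt_CBS k hy).differentiableAt.differentiableWithinAt

section MeanValue

variable {k a b C : ℝ}

lemma CBS_sub_le_mul_sub (hk : 0 ≤ k) (ha : 0 ≤ a) (hab : a ≤ b)
    (hC : ∀ t ∈ Ioo a b, phi (-k / t + t / 2) ≤ C) : CBS k b - CBS k a ≤ C * (b - a) :=
  (convex_Icc a b).image_sub_le_mul_sub_of_deriv_le
    ((continuousOn_CBS hk).mono fun _ ht => ha.trans ht.1)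
    ((differentiableOn_CBS k).mono (interior_Icc.trans_subset fun _ ht => ha.trans_lt ht.1))
    (fun t ht => by
      rw [interior_Icc] at ht
      exact (hasDerivAt_CBS k (ha.trans_lt ht.1)).deriv ▸ hC t ht)
    a (left_mem_Icc.mpr hab) b (right_mem_Icc.mpr hab) hab

lemma mul_sub_le_CBS_sub (hk : 0 ≤ k) (ha : 0 ≤ a) (hab : a ≤ b)
    (hC : ∀ t ∈ Ioo a b, C ≤ phi (-k / t + t / 2)) : C * (b - a) ≤ CBS k b - CBS k a :=
  (convex_Icc a b).mul_sub_le_image_sub_of_le_deriv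
    ((continuousOn_CBS hk).mono fun _ ht => ha.trans ht.1)
    ((differentiableOn_CBS k).mono (interior_Icc.trans_subset fun _ ht => ha.trans_lt ht.1))
    (fun t ht => by
      rw [interior_Icc] at ht
      exact (hasDerivAt_CBS k (ha.trans_lt ht.1)).deriv ▸ hC t ht)
    a (left_mem_Icc.mpr hab) b (right_mem_Icc.mpr hab) hab

end MeanValue

noncomputable def newtonStep (k c y : ℝ) : ℝ := y + (c - CBS k y) / phi (-k / y + y / 2)

lemma newtonStep_CBS_self (k y : ℝ) : newtonStep k (CBS k y) y = y := by
  simp [newtonStep]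

lemma le_newtonStep_iff {k c x y : ℝ} :
    x ≤ newtonStep k c y ↔ CBS k y - c ≤ phi (-k / y + y / 2) * (y - x) := by
  rw [newtonStep, ← sub_le_iff_le_add', le_div_iff₀ (phi_pos _)]
  constructor <;> intro h <;> linarith

lemma newtonStep_le_iff {k c x y : ℝ} :
    newtonStep k c y ≤ x ↔ phi (-k / y + y / 2) * (y - x) ≤ CBS k y - c := by
  rw [newtonStep, ← le_sub_iff_add_le', div_le_iff₀ (phi_pos _)]
  constructor <;> intro h <;> linarith

lemma newtonStep_zero_le {k y : ℝ} (hk : 0 ≤ k) (hy : 0 ≤ y) : newtonStep k 0 y ≤ y :=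
  newtonStep_le_iff.mpr (by simpa using CBS_nonneg hk hy)

lemma le_newtonStep {k x y : ℝ} (hk : 0 ≤ k) (hx : x ∈ Icc 0 √(2 * k))
    (hy : y ∈ Ioc 0 √(2 * k)) : x ≤ newtonStep k (CBS k x) y := by
  rw [le_newtonStep_iff]
  rcases le_total x y with hxy | hyx
  · exact CBS_sub_le_mul_sub hk hx.1 hxy fun t ht =>
      monotoneOn_vega hk ⟨hx.1.trans_lt ht.1, ht.2.le.trans hy.2⟩ hy ht.2.le
  · have := mul_sub_le_CBS_sub hk hy.1.le hyx fun t ht =>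
      monotoneOn_vega hk hy ⟨hy.1.trans ht.1, ht.2.le.trans hx.2⟩ ht.1.le
    linarith

lemma newtonStep_le {k x y : ℝ} (hk : 0 ≤ k) (hx : x ∈ Ici √(2 * k))
    (hy : y ∈ Ici √(2 * k)) : newtonStep k (CBS k x) y ≤ x := by
  rw [newtonStep_le_iff]
  have h0 : 0 ≤ √(2 * k) := Real.sqrt_nonneg _
  rcases le_total x y with hxy | hyx
  · exact mul_sub_le_CBS_sub hk (h0.trans hx) hxy fun t ht =>
      antitoneOn_vega hk (hx.trans ht.1.le) hy ht.2.le
  · have := CBS_sub_le_mul_sub hk (h0.trans hy) hyx fun t ht =>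
      antitoneOn_vega hk hy (hy.trans ht.1.le) ht.1.le
    linarith

lemma csInf_image_Ioc_zero {F : ℝ → ℝ} {s : ℝ} (h0 : ∀ y ∈ Ioc 0 s, 0 ≤ F y)
    (hF : ∀ y ∈ Ioc 0 s, F y ≤ y) : sInf (F '' Ioc 0 s) = 0 := by
  rcases le_or_gt s 0 with hs | hs
  · simp [Ioc_eq_empty_of_le hs]
  have hne : (Ioc 0 s).Nonempty := nonempty_Ioc.mpr hs
  have hbdd : BddBelow (F '' Ioc 0 s) := ⟨0, forall_mem_image.mpr h0⟩
  refine le_antisymm ?_ (le_csInf (hne.image F) (forall_mem_image.mpr h0))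
  calc sInf (F '' Ioc 0 s) ≤ sInf (Ioc 0 s) :=
        le_csInf hne fun y hy => (csInf_le hbdd (mem_image_of_mem F hy)).trans (hF y hy)
    _ = 0 := csInf_Ioc hs

theorem stmt_12 (k c : ℝ) (hk : 0 ≤ k) (hc0 : 0 ≤ c) (hc1 : c < 1) :
    (c ≤ CBS k (Real.sqrt (2 * k)) →
      YBS k c = sInf ((fun y => y + (c - CBS k y) / phi (-k / y + y / 2)) ''
        {y : ℝ | 0 < y ∧ y ≤ Real.sqrt (2 * k)})) ∧
    (CBS k (Real.sqrt (2 * k)) ≤ c →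
      YBS k c = sSup ((fun y => y + (c - CBS k y) / phi (-k / y + y / 2)) ''
        Set.Ici (Real.sqrt (2 * k)))) := by
  obtain ⟨x, hx, rfl⟩ := exists_CBS_eq hk hc0 hc1
  have hs : 0 ≤ √(2 * k) := Real.sqrt_nonneg _
  rw [YBS_CBS hk hx]
  refine ⟨fun hxs => ?_, fun hsx => ?_⟩
  · replace hxs := ((strictMonoOn_CBS hk).le_iff_le hx hs).mp hxs
    change x = sInf (newtonStep k (CBS k x) '' Ioc 0 √(2 * k))
    rcases hx.eq_or_lt with rfl | hx
    · have hlow : ∀ y ∈ Ioc 0 √(2 * k), 0 ≤ newtonStep k 0 y := fun y hy => by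
        simpa [CBS_zero hk] using le_newtonStep hk ⟨le_rfl, hs⟩ hy
      rw [CBS_zero hk, csInf_image_Ioc_zero hlow fun y hy => newtonStep_zero_le hk hy.1.le]
    · have hleast : IsLeast (newtonStep k (CBS k x) '' Ioc 0 √(2 * k)) x :=
        ⟨⟨x, ⟨hx, hxs⟩, newtonStep_CBS_self k x⟩,
          forall_mem_image.mpr fun y hy => le_newtonStep hk ⟨hx.le, hxs⟩ hy⟩
      exact hleast.csInf_eq.symm
  · replace hsx := ((strictMonoOn_CBS hk).le_iff_le hs hx).mp hsx
    change x = sSup (newtonStep k (CBS k x) '' Ici √(2 * k))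
    have hgreatest : IsGreatest (newtonStep k (CBS k x) '' Ici √(2 * k)) x :=
      ⟨⟨x, hsx, newtonStep_CBS_self k x⟩,
        forall_mem_image.mpr fun y hy => newtonStep_le hk hsx hy⟩
    exact hgreatest.csSup_eq.symm
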